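/- Let X be a real n×k matrix with singular value decomposition X = U D Vᵀ, where U is an n×k real matrix with UᵀU equal to the k×k identity, V is a k×k real orthogonal matrix, and D is the k×k diagonal matrix with diagonal entries λ₁,…,λ_k. Let y ∈ ℝⁿ, γ ∈ ℝ, and for σ₁ > 0, σ₂ > 0, β ∈ ℝᵏ define q(σ₁,σ₂,β) = σ₁^{−(k+1)} σ₂^{−n} exp( −γ (log σ₁)² − σ₂²/2 − ‖Xβ − y‖²/(2σ₂²) − ‖β‖²/(2σ₁²) ). Set w = VᵀXᵀy, a₂ᵢ = λᵢ²/(2σ₂²) + 1/(2σ₁²), a₁ᵢ = wᵢ/σ₂², a₀ = −yᵀy/(2σ₂²), and q̃(σ₁,σ₂) = σ₁^{−(k+1)} σ₂^{−n} exp( −γ (log σ₁)² − σ₂²/2 + a₀ + ∑_{i=1}^{k} a₁ᵢ²/(4 a₂ᵢ) ) · (2π)^{k/2} · ∏_{i=1}^{k} (2 a₂ᵢ)^{−1/2}. Then for all σ₁, σ₂ > 0, the ℝᵏ-valued Lebesgue integral ∫_{ℝᵏ} β · q(σ₁,σ₂,β) dβ equals q̃(σ₁,σ₂) · V m, where m ∈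 ℝᵏ is the vector with components mᵢ = a₁ᵢ/(2 a₂ᵢ). -/

import Mathlib

/-!
The substitution `β = V α` is a linear isometry of `ℝᵏ`, so it preserves Lebesgue measure and
`‖β‖ = ‖α‖`; since `X V = U D` with `Uᵀ U = 1`, it diagonalises the exponent into
`a₀ + ∑ᵢ (-a₂ᵢ αᵢ² + a₁ᵢ αᵢ)`. The integrand `α ↦ exp(…) α` is then a product of one-dimensional
Gaussians times `α`, so by Fubini its `i`-th coordinate is the first moment of the `i`-th factor
times the masses of the others. Completing the square, each factor has mass
`√(π / a₂ᵢ) exp (a₁ᵢ² / (4 a₂ᵢ))` and mean `a₁ᵢ / (2 a₂ᵢ) = mᵢ`.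
-/

open Matrix MeasureTheory Real WithLp

section Gaussian

lemma integral_mul_exp_neg_mul_sq_eq_zero (a : ℝ) : ∫ x : ℝ, x * exp (-a * x ^ 2) = 0 := by
  have h := integral_neg_eq_self (fun x : ℝ => x * exp (-a * x ^ 2)) volume
  simp only [neg_sq, neg_mul, integral_neg] at h ⊢
  linarith

variable {a : ℝ}

lemma exp_neg_mul_sq_add_mul (ha : a ≠ 0) (b x : ℝ) :
    exp (-a * x ^ 2 + b * x) = exp (b ^ 2 / (4 * a)) * exp (-a * (x - b / (2 * a)) ^ 2) := by
  rw [← exp_add]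
  congr 1
  field_simp
  ring

variable (ha : 0 < a) (b : ℝ)
include ha

lemma integrable_exp_neg_mul_sq_add_mul : Integrable fun x : ℝ => exp (-a * x ^ 2 + b * x) := by
  simp_rw [exp_neg_mul_sq_add_mul ha.ne' b]
  exact ((integrable_exp_neg_mul_sq ha).comp_sub_right _).const_mul _

lemma integral_exp_neg_mul_sq_add_mul :
    ∫ x : ℝ, exp (-a * x ^ 2 + b * x) = √(π / a) * exp (b ^ 2 / (4 * a)) := by
  simp_rw [exp_neg_mul_sq_add_mul ha.ne' b, integral_const_mul,
    integral_sub_right_eq_self (fun x => exp (-a * x ^ 2)), integral_gaussian, mul_comm]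

lemma integrable_mul_exp_neg_mul_sq_add_mul :
    Integrable fun x : ℝ => x * exp (-a * x ^ 2 + b * x) := by
  have h : ∀ x : ℝ, x * exp (-a * x ^ 2 + b * x) = exp (b ^ 2 / (4 * a)) *
      ((x - b / (2 * a)) * exp (-a * (x - b / (2 * a)) ^ 2)
        + b / (2 * a) * exp (-a * (x - b / (2 * a)) ^ 2)) := fun x => by
    rw [exp_neg_mul_sq_add_mul ha.ne' b]
    ring
  simp_rw [h]
  exact (((integrable_mul_exp_neg_mul_sq ha).comp_sub_right _).add
    (((integrable_exp_neg_mul_sq ha).comp_sub_right _).const_mul _)).const_mul _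

lemma integral_mul_exp_neg_mul_sq_add_mul :
    ∫ x : ℝ, x * exp (-a * x ^ 2 + b * x) = b / (2 * a) * (√(π / a) * exp (b ^ 2 / (4 * a))) := by
  -- centre the Gaussian at its mean `b / (2a)`; the odd part then integrates to zero
  rw [← integral_add_right_eq_self _ (b / (2 * a))]
  have h : ∀ x : ℝ, (x + b / (2 * a)) * exp (-a * (x + b / (2 * a)) ^ 2 + b * (x + b / (2 * a)))
      = exp (b ^ 2 / (4 * a)) * (x * exp (-a * x ^ 2))
        + exp (b ^ 2 / (4 * a)) * b / (2 * a) * exp (-a * x ^ 2) := fun x => by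
    rw [exp_neg_mul_sq_add_mul ha.ne' b, add_sub_cancel_right]
    ring
  simp_rw [h]
  rw [integral_add ((integrable_mul_exp_neg_mul_sq ha).const_mul _)
    ((integrable_exp_neg_mul_sq ha).const_mul _), integral_const_mul, integral_const_mul,
    integral_mul_exp_neg_mul_sq_eq_zero, integral_gaussian]
  ring

end Gaussian

section ProductDensity

variable {ι : Type*} [Fintype ι] [DecidableEq ι]

lemma prod_mul_eq_prod_update {M : Type*} [CommMonoid M] (f : ι → M → M) (x : ι → M) (i : ι) :
    (∏ j, f j (x j)) * x i = ∏ j, Function.update f i (fun t => t * f i t) j (x j) := by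
  rw [mul_comm, ← Finset.mul_prod_erase _ _ (Finset.mem_univ i),
    ← Finset.mul_prod_erase _ (fun j => Function.update f i _ j (x j)) (Finset.mem_univ i),
    Function.update_self, mul_assoc]
  congr 2
  exact Finset.prod_congr rfl fun j hj => by rw [Function.update_of_ne (Finset.ne_of_mem_erase hj)]

variable (f : ι → ℝ → ℝ) (i : ι)

lemma integral_prod_mul_eq :
    ∫ x : ι → ℝ, (∏ j, f j (x j)) * x i
      = (∫ t, t * f i t) * ∏ j ∈ Finset.univ.erase i, ∫ t, f j t := by
  simp_rw [prod_mul_eq_prod_update, integral_fintype_prod_volume_eq_prod,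
    ← Finset.mul_prod_erase _ _ (Finset.mem_univ i), Function.update_self]
  congr 1
  exact Finset.prod_congr rfl fun j hj => by rw [Function.update_of_ne (Finset.ne_of_mem_erase hj)]

variable {f}

lemma integrable_prod_mul (hf : ∀ j, Integrable (f j)) (hf' : ∀ j, Integrable fun t => t * f j t) :
    Integrable fun x : ι → ℝ => (∏ j, f j (x j)) * x i := by
  simp_rw [prod_mul_eq_prod_update]
  refine Integrable.fintype_prod fun j => ?_
  rcases eq_or_ne j i with rfl | hj
  · simpa using hf' j
  · simpa [Function.update_of_ne hj] using hf j

lemma integral_prod_smul_apply (hf : ∀ j, Integrable (f j))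
    (hf' : ∀ j, Integrable fun t => t * f j t) :
    (∫ x : EuclideanSpace ℝ ι, (∏ j, f j (x j)) • x) i
      = (∫ t, t * f i t) * ∏ j ∈ Finset.univ.erase i, ∫ t, f j t := by
  have hofLp := PiLp.volume_preserving_ofLp ι
  have hemb := (MeasurableEquiv.toLp 2 (ι → ℝ)).symm.measurableEmbedding
  rw [eval_integral_piLp]
  · simp_rw [PiLp.smul_apply, smul_eq_mul]
    rw [hofLp.integral_comp hemb (fun x => (∏ j, f j (x j)) * x i), integral_prod_mul_eq]
  · intro j
    simp_rw [PiLp.smul_apply, smul_eq_mul]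
    exact (hofLp.integrable_comp_emb hemb).2 (integrable_prod_mul j hf hf')

end ProductDensity

lemma integral_exp_sum_smul {ι : Type*} [Fintype ι] (a b : ι → ℝ) (ha : ∀ i, 0 < a i) :
    ∫ x : EuclideanSpace ℝ ι, exp (∑ i, (-a i * x i ^ 2 + b i * x i)) • x
      = (∏ i, √(π / a i) * exp (b i ^ 2 / (4 * a i))) • toLp 2 (fun i => b i / (2 * a i)) := by
  classical
  ext i
  simp_rw [exp_sum]
  rw [integral_prod_smul_apply (f := fun j t => exp (-a j * t ^ 2 + b j * t)) i
    (fun j => integrable_exp_neg_mul_sq_add_mul (ha j) (b j))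
    (fun j => integrable_mul_exp_neg_mul_sq_add_mul (ha j) (b j)),
    integral_mul_exp_neg_mul_sq_add_mul (ha i)]
  simp_rw [integral_exp_neg_mul_sq_add_mul (ha _)]
  rw [mul_assoc, Finset.mul_prod_erase _ (fun j => √(π / a j) * exp (b j ^ 2 / (4 * a j)))
    (Finset.mem_univ i)]
  simp [mul_comm]

section EuclideanMatrix

variable {m n : Type*} [Fintype m] [Fintype n]

lemma inner_toLp_mulVec (A : Matrix m n ℝ) (x : n → ℝ) (y : EuclideanSpace ℝ m) :
    inner ℝ (toLp 2 (A *ᵥ x)) y = x ⬝ᵥ (Aᵀ *ᵥ ofLp y) := by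
  rw [EuclideanSpace.inner_eq_star_dotProduct, star_trivial, ofLp_toLp, dotProduct_comm,
    dotProduct_mulVec, vecMul_transpose]

lemma norm_toLp_mulVec_sq (A : Matrix m n ℝ) (x : n → ℝ) :
    ‖toLp 2 (A *ᵥ x)‖ ^ 2 = x ⬝ᵥ ((Aᵀ * A) *ᵥ x) := by
  rw [← real_inner_self_eq_norm_sq, inner_toLp_mulVec, ofLp_toLp, mulVec_mulVec]

end EuclideanMatrix

noncomputable def Matrix.orthogonalGroup.toLinearIsometryEquiv {n : Type*} [Fintype n]
    [DecidableEq n] (V : orthogonalGroup n ℝ) :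
    EuclideanSpace ℝ n ≃ₗᵢ[ℝ] EuclideanSpace ℝ n :=
  Unitary.linearIsometryEquiv ⟨toEuclideanCLM (n := n) (𝕜 := ℝ) V, Unitary.map_mem _ V.2⟩

lemma Matrix.orthogonalGroup.toLinearIsometryEquiv_apply {n : Type*} [Fintype n]
    [DecidableEq n] (V : orthogonalGroup n ℝ) (x : EuclideanSpace ℝ n) :
    orthogonalGroup.toLinearIsometryEquiv V x = toLp 2 ((V : Matrix n n ℝ) *ᵥ ofLp x) :=
  toEuclideanCLM_toLp _ _

lemma LinearIsometryEquiv.integral_smul_self {E : Type*} [NormedAddCommGroup E]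
    [InnerProductSpace ℝ E] [FiniteDimensional ℝ E] [MeasurableSpace E] [BorelSpace E]
    (e : E ≃ₗᵢ[ℝ] E) (g : E → ℝ) :
    ∫ x, g x • x = e (∫ x, g (e x) • x) := by
  calc ∫ x, g x • x = ∫ x, g (e x) • e x :=
        (e.measurePreserving.integral_comp e.toHomeomorph.measurableEmbedding _).symm
    _ = ∫ x, e (g (e x) • x) := by simp_rw [map_smul]
    _ = e (∫ x, g (e x) • x) := e.toLinearIsometry.integral_comp_comm _

lemma norm_toLp_mulVec_sub_sq_of_svd {n k : Type*} [Fintype n] [Fintype k] [DecidableEq k]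
    {X U : Matrix n k ℝ} {V : Matrix k k ℝ} {lam : k → ℝ} (hU : Uᵀ * U = 1) (hV : Vᵀ * V = 1)
    (hX : X = U * diagonal lam * Vᵀ) (α : k → ℝ) (y : EuclideanSpace ℝ n) :
    ‖toLp 2 (X *ᵥ (V *ᵥ α)) - y‖ ^ 2
      = ∑ i, lam i ^ 2 * α i ^ 2 - 2 * ∑ i, (Vᵀ *ᵥ (Xᵀ *ᵥ ofLp y)) i * α i + ‖y‖ ^ 2 := by
  have hXV : (X * V)ᵀ * (X * V) = diagonal fun i => lam i ^ 2 := by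
    rw [hX, Matrix.mul_assoc, hV, Matrix.mul_one, transpose_mul, Matrix.mul_assoc,
      ← Matrix.mul_assoc Uᵀ, hU, Matrix.one_mul, diagonal_transpose, diagonal_mul_diagonal]
    simp_rw [sq]
  rw [norm_sub_sq_real, mulVec_mulVec, norm_toLp_mulVec_sq, hXV, inner_toLp_mulVec,
    transpose_mul, ← mulVec_mulVec]
  simp only [dotProduct, mulVec_diagonal]
  congr 2
  · exact Finset.sum_congr rfl fun i _ => by ring
  · exact congrArg _ (Finset.sum_congr rfl fun i _ => mul_comm _ _)

lemma exponent_eq_sum_of_svd {n k : Type*} [Fintype n] [Fintype k] [DecidableEq k]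
    {X U : Matrix n k ℝ} {V : Matrix k k ℝ} {lam : k → ℝ} (hU : Uᵀ * U = 1) (hV : Vᵀ * V = 1)
    (hX : X = U * diagonal lam * Vᵀ) (y : EuclideanSpace ℝ n) (σ₁ σ₂ c : ℝ)
    (α : EuclideanSpace ℝ k) :
    c - ‖toLp 2 (X *ᵥ (V *ᵥ ofLp α)) - y‖ ^ 2 / (2 * σ₂ ^ 2) - ‖α‖ ^ 2 / (2 * σ₁ ^ 2)
      = c + -(ofLp y ⬝ᵥ ofLp y) / (2 * σ₂ ^ 2)
        + ∑ i, (-(lam i ^ 2 / (2 * σ₂ ^ 2) + 1 / (2 * σ₁ ^ 2)) * α i ^ 2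
          + (Vᵀ *ᵥ (Xᵀ *ᵥ ofLp y)) i / σ₂ ^ 2 * α i) := by
  have hsum : ∑ i, (-(lam i ^ 2 / (2 * σ₂ ^ 2) + 1 / (2 * σ₁ ^ 2)) * α i ^ 2
      + (Vᵀ *ᵥ (Xᵀ *ᵥ ofLp y)) i / σ₂ ^ 2 * α i)
      = -(∑ i, lam i ^ 2 * α i ^ 2) / (2 * σ₂ ^ 2)
        + (∑ i, (Vᵀ *ᵥ (Xᵀ *ᵥ ofLp y)) i * α i) / σ₂ ^ 2 - (∑ i, α i ^ 2) / (2 * σ₁ ^ 2) := by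
    simp only [Finset.sum_div, ← Finset.sum_neg_distrib, neg_div, ← Finset.sum_add_distrib,
      ← Finset.sum_sub_distrib]
    exact Finset.sum_congr rfl fun i _ => by ring
  rw [norm_toLp_mulVec_sub_sq_of_svd hU hV hX, EuclideanSpace.real_norm_sq_eq α,
    EuclideanSpace.real_norm_sq_eq y, hsum]
  simp only [dotProduct, ← sq]
  ring

lemma prod_sqrt_pi_div {ι : Type*} [Fintype ι] (a : ι → ℝ) (ha : ∀ i, 0 < a i) :
    ∏ i, √(π / a i) = (2 * π) ^ ((Fintype.card ι : ℝ) / 2) * ∏ i, (2 * a i) ^ (-(1 / 2 : ℝ)) := by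
  have h : ∀ i, √(π / a i) = √(2 * π) * (2 * a i) ^ (-(1 / 2 : ℝ)) := fun i => by
    rw [rpow_neg (by linarith [ha i]), ← sqrt_eq_rpow, ← div_eq_mul_inv,
      ← sqrt_div (by positivity), mul_div_mul_left _ _ two_ne_zero]
  rw [Finset.prod_congr rfl fun i _ => h i, Finset.prod_mul_distrib, Finset.prod_const,
    Finset.card_univ, sqrt_eq_rpow, ← rpow_natCast, ← rpow_mul (by positivity)]
  ring_nf

theorem stmt8_general
    (n k : ℕ)
    (X U : Matrix (Fin n) (Fin k) ℝ)
    (V : Matrix (Fin k) (Fin k) ℝ)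
    (lam : Fin k → ℝ)
    (hU : Uᵀ * U = 1)
    (hV₁ : Vᵀ * V = 1)
    (hX : X = U * Matrix.diagonal lam * Vᵀ)
    (y : EuclideanSpace ℝ (Fin n)) (γ : ℝ)
    (σ₁ σ₂ : ℝ) (hσ₁ : 0 < σ₁)
    (w : Fin k → ℝ)
    (hw : w = Vᵀ.mulVec (Xᵀ.mulVec y))
    (a₂ a₁ : Fin k → ℝ) (a₀ : ℝ)
    (ha₂ : ∀ i, a₂ i = lam i ^ 2 / (2 * σ₂ ^ 2) + 1 / (2 * σ₁ ^ 2))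
    (ha₁ : ∀ i, a₁ i = w i / σ₂ ^ 2)
    (ha₀ : a₀ = -(y ⬝ᵥ y) / (2 * σ₂ ^ 2))
    (m : Fin k → ℝ)
    (hm : ∀ i, m i = a₁ i / (2 * a₂ i)) :
    (∫ β : EuclideanSpace ℝ (Fin k),
        (σ₁ ^ (-((k : ℤ) + 1)) * σ₂ ^ (-(n : ℤ)) *
          Real.exp (-γ * Real.log σ₁ ^ 2 - σ₂ ^ 2 / 2
            - ‖(EuclideanSpace.equiv (Fin n) ℝ).symm (X.mulVec β) - y‖ ^ 2 / (2 * σ₂ ^ 2)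
            - ‖β‖ ^ 2 / (2 * σ₁ ^ 2))) • β)
      = (σ₁ ^ (-((k : ℤ) + 1)) * σ₂ ^ (-(n : ℤ)) *
          Real.exp (-γ * Real.log σ₁ ^ 2 - σ₂ ^ 2 / 2 + a₀ + ∑ j, a₁ j ^ 2 / (4 * a₂ j)) *
          (2 * Real.pi) ^ ((k : ℝ) / 2) *
          ∏ j, (2 * a₂ j) ^ (-(1 / 2 : ℝ))) •
          (EuclideanSpace.equiv (Fin k) ℝ).symm (V.mulVec m) := by
  obtain rfl : m = fun i => a₁ i / (2 * a₂ i) := funext hm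
  set e := orthogonalGroup.toLinearIsometryEquiv ⟨V, (mem_orthogonalGroup_iff' _ _).2 hV₁⟩ with he
  have ha₂_pos : ∀ i, 0 < a₂ i := fun i => by rw [ha₂]; positivity
  have hexp : ∀ α, -γ * log σ₁ ^ 2 - σ₂ ^ 2 / 2
      - ‖(EuclideanSpace.equiv (Fin n) ℝ).symm (X.mulVec (e α)) - y‖ ^ 2 / (2 * σ₂ ^ 2)
      - ‖e α‖ ^ 2 / (2 * σ₁ ^ 2)
      = -γ * log σ₁ ^ 2 - σ₂ ^ 2 / 2 + a₀ + ∑ i, (-a₂ i * α i ^ 2 + a₁ i * α i) := fun α => by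
    rw [e.norm_map, he, orthogonalGroup.toLinearIsometryEquiv_apply]
    simp only [ha₂, ha₁, ha₀, hw]
    exact exponent_eq_sum_of_svd hU hV₁ hX y σ₁ σ₂ _ α
  rw [e.integral_smul_self]
  simp_rw [hexp, exp_add, ← mul_assoc, mul_smul, integral_smul,
    integral_exp_sum_smul a₂ a₁ ha₂_pos, map_smul, he, orthogonalGroup.toLinearIsometryEquiv_apply,
    smul_smul]
  congr 1
  rw [Finset.prod_mul_distrib, prod_sqrt_pi_div a₂ ha₂_pos, exp_sum, Fintype.card_fin]
  ring

/-- conditional form of eq. (570):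
`∫_{ℝᵏ} β q(σ₁,σ₂,β) dβ = q̃(σ₁,σ₂) · V m` where `mᵢ = a₁ᵢ/(2a₂ᵢ)`. -/
theorem stmt8
    (n k : ℕ) (hn : 0 < n) (hk : 0 < k)
    (X U : Matrix (Fin n) (Fin k) ℝ)
    (V : Matrix (Fin k) (Fin k) ℝ)
    (lam : Fin k → ℝ)
    (hU : Uᵀ * U = 1)
    (hV₁ : Vᵀ * V = 1) (hV₂ : V * Vᵀ = 1)
    (hX : X = U * Matrix.diagonal lam * Vᵀ)
    (y : EuclideanSpace ℝ (Fin n)) (γ : ℝ)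
    (σ₁ σ₂ : ℝ) (hσ₁ : 0 < σ₁) (hσ₂ : 0 < σ₂)
    (w : Fin k → ℝ)
    (hw : w = Vᵀ.mulVec (Xᵀ.mulVec y))
    (a₂ a₁ : Fin k → ℝ) (a₀ : ℝ)
    (ha₂ : ∀ i, a₂ i = lam i ^ 2 / (2 * σ₂ ^ 2) + 1 / (2 * σ₁ ^ 2))
    (ha₁ : ∀ i, a₁ i = w i / σ₂ ^ 2)
    (ha₀ : a₀ = -(y ⬝ᵥ y) / (2 * σ₂ ^ 2))
    (m : Fin k → ℝ)
    (hm : ∀ i, m i = a₁ i / (2 * a₂ i)) :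
    (∫ β : EuclideanSpace ℝ (Fin k),
        (σ₁ ^ (-((k : ℤ) + 1)) * σ₂ ^ (-(n : ℤ)) *
          Real.exp (-γ * Real.log σ₁ ^ 2 - σ₂ ^ 2 / 2
            - ‖(EuclideanSpace.equiv (Fin n) ℝ).symm (X.mulVec β) - y‖ ^ 2 / (2 * σ₂ ^ 2)
            - ‖β‖ ^ 2 / (2 * σ₁ ^ 2))) • β)
      = (σ₁ ^ (-((k : ℤ) + 1)) * σ₂ ^ (-(n : ℤ)) *
          Real.exp (-γ * Real.log σ₁ ^ 2 - σ₂ ^ 2 / 2 + a₀ + ∑ j, a₁ j ^ 2 / (4 * a₂ j)) *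
          (2 * Real.pi) ^ ((k : ℝ) / 2) *
          ∏ j, (2 * a₂ j) ^ (-(1 / 2 : ℝ))) •
          (EuclideanSpace.equiv (Fin k) ℝ).symm (V.mulVec m) :=
  stmt8_general n k X U V lam hU hV₁ hX y γ σ₁ σ₂ hσ₁ w hw a₂ a₁ a₀ ha₂ ha₁ ha₀ m hm
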